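/- arXiv:1712.06688 — 3 statements merged into one kernel-verified Lean document; each statement's English description precedes it below -/
import Mathlib

section
/- Let V be a type with a distinguished element root, S : ℕ → Set V ('in the data structure at time t'), and E : ℕ → V → Option V ('the pointer field of each node at time t'). Assume: (i) root ∈ S t for all t; (ii) for all t and u, if u ∈ S t and E t u = some v then v ∈ S t; (iii) removal is permanent and freezes a node: for all t and u, if u ∈ S t and u ∉ S (t+1), then for all s ≥ t+1, u ∉ S s and E s u = E t u. Then: if u ∈ S t₀ for some t₀ ≤ t and E t u = some v, there exists t' ≤ t with v ∈ S t'. -/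
theorem traversal_property {V : Type*} (root : V)
    (S : ℕ → Set V) (E : ℕ → V → Option V)
    (hroot : ∀ t, root ∈ S t)
    (hclosed : ∀ t u v, u ∈ S t → E t u = some v → v ∈ S t)
    (hperm : ∀ t u, u ∈ S t → u ∉ S (t+1) →
      ∀ s, t + 1 ≤ s → u ∉ S s ∧ E s u = E t u) :
    ∀ (u v : V) (t₀ t : ℕ), t₀ ≤ t → u ∈ S t₀ → E t u = some v →
      ∃ t', t' ≤ t ∧ v ∈ S t' := by
  intro u v t₀ t h hu hE
  obtain ⟨n, rfl⟩ := Nat.exists_eq_add_of_le h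
  clear h
  induction n generalizing t₀ with
  | zero => exact ⟨t₀, le_refl _, hclosed _ _ _ hu hE⟩
  | succ n ih =>
    by_cases h1 : u ∈ S (t₀ + 1)
    · have heq : t₀ + (n + 1) = (t₀ + 1) + n := by ring
      rw [heq] at hE ⊢
      exact ih (t₀ + 1) h1 hE
    · have hp := hperm t₀ u hu h1 (t₀ + (n + 1)) (by omega)
      exact ⟨t₀, by omega, hclosed _ _ _ hu (hp.2.symm.trans hE)⟩
end

section
/- Let g : ℕ → β model the mutable state of a record over time, f : ℕ → α its info field, and Fr : ℕ → Prop a 'frozen' predicate. Assume: (1) g can change only while frozen: for all t, g (t+1) ≠ g t implies Fr t; (2) the record becomes frozen only by a change of the info field: for all t, if ¬ Fr t and Fr (t+1) then f (t+1) ≠ f t; (3) f has the fresh-write property: for all t, if f (t+1) ≠ f t then f (t+1) ≠ f s for all s ≤ t. Then for any t₀ ≤ t₁ with ¬ Fr t₀ and f t₀ = f t₁, g is constant on [t₀, t₁]. -/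
lemma llx_never_return {α : Type*} (f : ℕ → α)
    (hfresh : ∀ t, f (t+1) ≠ f t → ∀ s ≤ t, f (t+1) ≠ f s)
    (t : ℕ) (h : f (t+1) ≠ f t) :
    ∀ u, t + 1 ≤ u → ∀ s ≤ t, f u ≠ f s := by
  intro u hu
  induction u, hu using Nat.le_induction with
  | base => exact hfresh t h
  | succ u hu ih =>
    intro s hs
    by_cases hc : f (u+1) = f u
    · rw [hc]; exact ih s hs
    · exact hfresh u hc s (hs.trans (by omega))

theorem llx_snapshot {α β : Type*} (g : ℕ → β) (f : ℕ → α) (Fr : ℕ → Prop)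
    (hg : ∀ t, g (t+1) ≠ g t → Fr t)
    (hfr : ∀ t, ¬ Fr t → Fr (t+1) → f (t+1) ≠ f t)
    (hfresh : ∀ t, f (t+1) ≠ f t → ∀ s ≤ t, f (t+1) ≠ f s)
    (t₀ t₁ : ℕ) (h01 : t₀ ≤ t₁) (hunfrozen : ¬ Fr t₀) (heq : f t₀ = f t₁) :
    ∀ t, t₀ ≤ t → t ≤ t₁ → g t = g t₀ := by
  have key : ∀ t, t₀ ≤ t → t ≤ t₁ → (¬ Fr t ∧ f t = f t₀ ∧ g t = g t₀) := by
    intro t ht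
    induction t, ht using Nat.le_induction with
    | base => exact fun _ => ⟨hunfrozen, rfl, rfl⟩
    | succ t ht ih =>
      intro ht1
      obtain ⟨hnf, hf, hgc⟩ := ih (by omega)
      have hfchg : f (t+1) = f t := by
        by_contra hc
        exact llx_never_return f hfresh t hc t₁ (by omega) t₀ ht heq.symm
      refine ⟨fun hF => hfr t hnf hF (by rw [hfchg]), hfchg.trans hf, ?_⟩
      by_cases hgc2 : g (t+1) = g t
      · rw [hgc2, hgc]
      · exact absurd (hg t hgc2) hnf
  exact fun t ht ht1 => (key t ht ht1).2.2
end

section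
/- Let f : ℕ → α satisfy the fresh-write property (every change introduces a value never previously attained). Model a set of CAS operations on f, each specified by a time t and an expected old value o, where the CAS at time t 'succeeds' iff f t = o and f (t+1) ≠ f t. If two CAS operations at times t₁ < t₂ both use the same expected old value o, and the CAS at time t₁ succeeds, then the CAS at time t₂ does not succeed. -/
theorem only_first_cas_succeeds {α : Type*} (f : ℕ → α)
    (hfresh : ∀ t, f (t+1) ≠ f t → ∀ s ≤ t, f (t+1) ≠ f s)
    (o : α) (t₁ t₂ : ℕ) (hlt : t₁ < t₂)
    (hsucc₁ : f t₁ = o ∧ f (t₁+1) ≠ f t₁) :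
    ¬ (f t₂ = o ∧ f (t₂+1) ≠ f t₂) := by
  obtain ⟨h1, h2⟩ := hsucc₁
  have key : ∀ n, t₁ + 1 ≤ n → f n ≠ o := by
    intro n hn
    induction n, hn using Nat.le_induction with
    | base => rw [← h1]; exact hfresh t₁ h2 t₁ le_rfl
    | succ n hn ih =>
      by_cases hc : f (n+1) = f n
      · rw [hc]; exact ih
      · rw [← h1]; exact hfresh n hc t₁ (le_trans (Nat.le_succ t₁) hn)
  intro h
  exact key t₂ hlt h.1
end
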